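/- For all real E and E', (tanh(βE/2) + tanh(βE'/2))/(E + E') ≤ (1/2)(tanh(βE/2)/E + tanh(βE'/2)/E'), where β > 0 and the left side is interpreted as its limit (β/2)·cosh^{-2}(βE/2) when E' = -E, and tanh(βE/2)/E is interpreted as β/2 when E = 0. -/

import Mathlib

/-!
Write `tanh (β E / 2) = E χ(E)`. Off the diagonal `E + E' = 0` this gives the exact gap
`(χ(E) + χ(E')) / 2 - Ξ(E, E') = (E'² - E²) (χ(E) - χ(E')) / (2 (E + E')²)`,
which is nonnegative because `χ` is even and decreasing in `|E|`: `tanh t / t` decreases on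
`t > 0` since its derivative has the sign of `t sech² t - tanh t ≤ 0`, i.e. of `2t ≤ sinh 2t`.
On the diagonal the same inequality `t sech² t ≤ tanh t` is exactly `(β/2) sech² (βE/2) ≤ χ(E)`.
-/

/-- `Ξ_β(E,E')`, with the convention `Ξ_β(E,-E) = (β/2)·cosh⁻²(βE/2)`. -/
noncomputable def Xi (β E E' : ℝ) : ℝ :=
  if E + E' = 0 then (β / 2) / Real.cosh (β * E / 2) ^ 2
  else (Real.tanh (β * E / 2) + Real.tanh (β * E' / 2)) / (E + E')

/-- `χ_β(E)`, with the convention `χ_β(0) = β/2`. -/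
noncomputable def chi (β E : ℝ) : ℝ :=
  if E = 0 then β / 2 else Real.tanh (β * E / 2) / E

open Real Set

namespace Real

theorem hasDerivAt_tanh (x : ℝ) : HasDerivAt tanh (1 / cosh x ^ 2) x := by
  have h : HasDerivAt (fun y => sinh y / cosh y)
      ((cosh x * cosh x - sinh x * sinh x) / cosh x ^ 2) x :=
    (hasDerivAt_sinh x).div (hasDerivAt_cosh x) (cosh_pos x).ne'
  rwa [← sq, ← sq, cosh_sq_sub_sinh_sq,
    funext_iff.mpr fun y => (tanh_eq_sinh_div_cosh y).symm] at h

theorem tanh_le_self {t : ℝ} (ht : 0 ≤ t) : tanh t ≤ t := by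
  have hderiv (x : ℝ) : HasDerivAt (fun y => y - tanh y) (1 - 1 / cosh x ^ 2) x :=
    (hasDerivAt_id x).sub (hasDerivAt_tanh x)
  have hmono : Monotone (fun y => y - tanh y) := by
    refine monotone_of_deriv_nonneg (fun x => (hderiv x).differentiableAt) fun x => ?_
    rw [(hderiv x).deriv, sub_nonneg]
    exact div_le_one_of_le₀ (one_le_pow₀ (one_le_cosh x)) (by positivity)
  simpa using hmono ht

theorem div_cosh_sq_le_tanh {t : ℝ} (ht : 0 ≤ t) : t / cosh t ^ 2 ≤ tanh t := by
  have h2t : 2 * t ≤ sinh (2 * t) := self_le_sinh_iff.mpr (by linarith)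
  rw [sinh_two_mul] at h2t
  have hc := cosh_pos t
  rw [tanh_eq_sinh_div_cosh, div_le_div_iff₀ (by positivity) hc]
  nlinarith

theorem antitoneOn_tanh_div : AntitoneOn (fun t => tanh t / t) (Ioi 0) := by
  have hderiv {x : ℝ} (hx : 0 < x) : HasDerivAt (fun t => tanh t / t)
      ((1 / cosh x ^ 2 * x - tanh x * 1) / x ^ 2) x :=
    (hasDerivAt_tanh x).div (hasDerivAt_id x) hx.ne'
  refine antitoneOn_of_deriv_nonpos (convex_Ioi 0)
    (fun x hx => (hderiv hx).continuousAt.continuousWithinAt) ?_ ?_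
  · rw [interior_Ioi]
    exact fun x hx => (hderiv hx).differentiableAt.differentiableWithinAt
  · rw [interior_Ioi]
    intro x hx
    rw [(hderiv hx).deriv]
    refine div_nonpos_of_nonpos_of_nonneg ?_ (sq_nonneg x)
    linarith [div_cosh_sq_le_tanh hx.le, show 1 / cosh x ^ 2 * x = x / cosh x ^ 2 by ring]

end Real

theorem chi_neg (β E : ℝ) : chi β (-E) = chi β E := by
  rcases eq_or_ne E 0 with rfl | hE
  · simp
  · simp [chi, hE, mul_neg, neg_div, tanh_neg, div_neg]

theorem chi_abs (β E : ℝ) : chi β |E| = chi β E := by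
  rcases abs_choice E with h | h <;> rw [h]
  exact chi_neg β E

theorem mul_chi (β E : ℝ) : E * chi β E = tanh (β * E / 2) := by
  rcases eq_or_ne E 0 with rfl | hE
  · simp
  · rw [chi, if_neg hE, mul_div_cancel₀ _ hE]

theorem chi_antitoneOn {β : ℝ} (hβ : 0 < β) : AntitoneOn (chi β) (Ici 0) := by
  intro a ha b hb hab
  rcases (mem_Ici.mp ha).eq_or_lt with rfl | ha
  · rcases (mem_Ici.mp hb).eq_or_lt with rfl | hb
    · rfl
    · rw [chi, chi, if_neg hb.ne', if_pos rfl, div_le_iff₀ hb]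
      linarith [tanh_le_self (by positivity : 0 ≤ β * b / 2)]
  · have hb : 0 < b := ha.trans_le hab
    have hscale {x : ℝ} (hx : 0 < x) :
        chi β x = β / 2 * (tanh (β * x / 2) / (β * x / 2)) := by
      rw [chi, if_neg hx.ne']
      field_simp
    rw [hscale ha, hscale hb]
    refine mul_le_mul_of_nonneg_left ?_ (by positivity)
    exact antitoneOn_tanh_div (by simp; positivity) (by simp; positivity) (by gcongr)

theorem chi_le_chi_of_abs_le {β : ℝ} (hβ : 0 < β) {a b : ℝ} (h : |a| ≤ |b|) :
    chi β b ≤ chi β a := by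
  rw [← chi_abs β a, ← chi_abs β b]
  exact chi_antitoneOn hβ (abs_nonneg a) (abs_nonneg b) h

theorem sq_sub_sq_mul_chi_sub_nonneg {β : ℝ} (hβ : 0 < β) (E E' : ℝ) :
    0 ≤ (E' ^ 2 - E ^ 2) * (chi β E - chi β E') := by
  rcases le_total |E| |E'| with h | h
  · exact mul_nonneg (sub_nonneg.mpr (sq_le_sq.mpr h))
      (sub_nonneg.mpr (chi_le_chi_of_abs_le hβ h))
  · exact mul_nonneg_of_nonpos_of_nonpos (sub_nonpos.mpr (sq_le_sq.mpr h))
      (sub_nonpos.mpr (chi_le_chi_of_abs_le hβ h))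

theorem half_div_cosh_sq_le_chi {β : ℝ} (hβ : 0 < β) (E : ℝ) :
    β / 2 / cosh (β * E / 2) ^ 2 ≤ chi β E := by
  rcases eq_or_ne E 0 with rfl | hE
  · simp [chi]
  have hE' : 0 < |E| := abs_pos.mpr hE
  have hcosh : cosh (β * E / 2) = cosh (β * |E| / 2) := by
    rw [← cosh_abs, abs_div, abs_mul, abs_of_pos hβ, abs_two]
  rw [← chi_abs, chi, if_neg hE'.ne', hcosh, le_div_iff₀ hE']
  calc β / 2 / cosh (β * |E| / 2) ^ 2 * |E| = β * |E| / 2 / cosh (β * |E| / 2) ^ 2 := by ring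
    _ ≤ tanh (β * |E| / 2) := div_cosh_sq_le_tanh (by positivity)

theorem Xi_le_half_add_chi (β : ℝ) (hβ : 0 < β) (E E' : ℝ) :
    Xi β E E' ≤ (1 / 2) * (chi β E + chi β E') := by
  unfold Xi
  split_ifs with hsum
  · obtain rfl : E' = -E := by linarith
    rw [chi_neg]
    linarith [half_div_cosh_sq_le_chi hβ E]
  · rw [← mul_chi β E, ← mul_chi β E']
    have hgap : 1 / 2 * (chi β E + chi β E') - (E * chi β E + E' * chi β E') / (E + E')
        = (E' ^ 2 - E ^ 2) * (chi β E - chi β E') / (2 * (E + E') ^ 2) := by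
      field_simp
      ring
    have := div_nonneg (sq_sub_sq_mul_chi_sub_nonneg hβ E E')
      (by positivity : (0 : ℝ) ≤ 2 * (E + E') ^ 2)
    linarith
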